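/- The partial sums ∑_{k=1}^n μ(k)/k are bounded in absolute value by 1 for all n ≥ 1. -/

import Mathlib

/-!
Multiply the sum by `n` and split `n / k = ⌊n / k⌋ + {n / k}`. The floor part is
`∑_{k ≤ n} μ(k) ⌊n / k⌋ = ∑_{m ≤ n} (μ * 1)(m) = 1`, and in the fractional part the term `k = 1`
vanishes while the other `n - 1` terms have absolute value at most `1`; hence `|n · ∑ μ(k) / k| ≤ n`.
-/

open ArithmeticFunction Finset
open ArithmeticFunction.Moebius

theorem sum_Icc_moebius_mul_div_eq_one {R : Type*} [Ring R] {N : ℕ} (hN : 0 < N) :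
    ∑ k ∈ Icc 1 N, (μ k : R) * (N / k : ℕ) = 1 := by
  have h := sum_Ioc_mul_zeta_eq_sum (μ : ArithmeticFunction R) N
  rw [coe_moebius_mul_coe_zeta] at h
  rw [show Icc 1 N = Ioc 0 N from rfl]
  simpa [one_apply, Nat.one_le_of_lt hN] using h.symm

theorem natCast_div_eq_div_add_fract {K : Type*} [Field K] [LinearOrder K] [IsStrictOrderedRing K]
    [FloorRing K] (N k : ℕ) : (N : K) / k = (N / k : ℕ) + Int.fract ((N : K) / k) := by
  conv_lhs => rw [← Int.floor_add_fract ((N : K) / k)]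
  rw [Int.floor_div_natCast, Int.floor_natCast]
  norm_cast

theorem abs_sum_Icc_mul_fract_div_le (a : ℕ → ℝ) (ha : ∀ k, |a k| ≤ 1) (N : ℕ) :
    |∑ k ∈ Icc 1 N, a k * Int.fract ((N : ℝ) / k)| ≤ (N - 1 : ℕ) := by
  rcases N.eq_zero_or_pos with rfl | hN
  · simp
  rw [Icc_eq_cons_Ioc hN, sum_cons, Nat.cast_one, div_one, Int.fract_natCast, mul_zero, zero_add]
  calc |∑ k ∈ Ioc 1 N, a k * Int.fract ((N : ℝ) / k)|
      ≤ ∑ k ∈ Ioc 1 N, |a k * Int.fract ((N : ℝ) / k)| := abs_sum_le_sum_abs _ _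
    _ ≤ ∑ k ∈ Ioc 1 N, 1 := by
      refine sum_le_sum fun k _ => ?_
      rw [abs_mul, abs_of_nonneg (Int.fract_nonneg ((N : ℝ) / k))]
      exact mul_le_one₀ (ha k) (Int.fract_nonneg _) (Int.fract_lt_one _).le
    _ = (N - 1 : ℕ) := by simp

theorem abs_sum_moebius_div_le_one_general (n : ℕ) :
    |∑ k ∈ Finset.Icc 1 n, (μ k : ℝ) / k| ≤ 1 := by
  rcases n.eq_zero_or_pos with rfl | hn
  · simp
  set E := ∑ k ∈ Icc 1 n, (μ k : ℝ) * Int.fract ((n : ℝ) / k)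
  have hnS : (n : ℝ) * ∑ k ∈ Icc 1 n, (μ k : ℝ) / k = 1 + E := by
    rw [← sum_Icc_moebius_mul_div_eq_one hn, ← sum_add_distrib, mul_sum]
    refine sum_congr rfl fun k _ => ?_
    rw [← mul_add, ← natCast_div_eq_div_add_fract]
    ring
  have hE : |E| ≤ n - 1 := by
    simpa [Nat.cast_sub hn] using
      abs_sum_Icc_mul_fract_div_le (fun k => μ k) (fun k => mod_cast abs_moebius_le_one) n
  refine le_of_mul_le_mul_left ?_ (Nat.cast_pos.mpr hn)
  calc (n : ℝ) * |∑ k ∈ Icc 1 n, (μ k : ℝ) / k| = |1 + E| := by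
        rw [← hnS, abs_mul, Nat.abs_cast]
    _ ≤ |1| + |E| := abs_add_le _ _
    _ ≤ n * 1 := by rw [abs_one]; linarith

theorem abs_sum_moebius_div_le_one (n : ℕ) (hn : 1 ≤ n) :
    |∑ k ∈ Finset.Icc 1 n, (μ k : ℝ) / k| ≤ 1 :=
  abs_sum_moebius_div_le_one_general n
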